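/- Let R > 0 and λ ∈ ℝ, let f : [0, R] → ℝ be twice continuously differentiable, let K₀ : [0, R] → ℝ be continuous, and let φ : (0, R] → ℝ be differentiable such that r·φ(r) → 0 as r → 0⁺ and φ(r) + r·φ'(r) ≤ −∫₀^r t·(K₀(t) + λ − f''(t)) dt for all r ∈ (0, R]. Then for every r ∈ (0, R] one has r·φ(r) ≤ −λr³/6 + r·f(r) + r·f(0) − 2·∫₀^r f(t) dt − ∫₀^r ∫₀^s t·K₀(t) dt ds. -/

import Mathlib

open Set Filter MeasureTheory
open scoped Topology

/-
Along `(0, R]` the hypothesis says `(r φ)' = φ + r φ' ≤ -∫₀ʳ t (K₀ + λ - f'')`. Integrating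
`t f''` by parts shows that the right-hand side `B(r)` of the estimate is a primitive of the same
function `-∫₀ʳ t (K₀ + λ - f'')`, with `B(0) = 0`. Hence `r φ(r) - B(r)` is nonincreasing on
`(0, R]` and tends to `0` as `r → 0⁺`, so it is nonpositive.
-/

theorem le_of_tendsto_nhdsGT_of_hasDerivAt_nonpos {g g' : ℝ → ℝ} {a b L : ℝ} (hab : a < b)
    (hcont : ContinuousOn g (Ioc a b)) (hderiv : ∀ x ∈ Ioo a b, HasDerivAt g (g' x) x)
    (hg' : ∀ x ∈ Ioo a b, g' x ≤ 0) (hlim : Tendsto g (𝓝[>] a) (𝓝 L)) : g b ≤ L := by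
  have hanti : AntitoneOn g (Ioc a b) :=
    antitoneOn_of_hasDerivWithinAt_nonpos (convex_Ioc a b) hcont
      (by simpa only [interior_Ioc] using fun x hx => (hderiv x hx).hasDerivWithinAt)
      (by simpa only [interior_Ioc] using hg')
  refine ge_of_tendsto hlim ?_
  filter_upwards [Ioc_mem_nhdsGT hab] with x hx
  exact hanti hx (right_mem_Ioc.2 hab) hx.2

theorem ContinuousOn.continuousOn_primitive {u : ℝ → ℝ} {a b : ℝ}
    (hu : ContinuousOn u (Icc a b)) : ContinuousOn (fun x => ∫ t in a..x, u t) (Icc a b) := by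
  rcases le_or_gt a b with hab | hba
  · rw [← uIcc_of_le hab] at hu ⊢
    exact intervalIntegral.continuousOn_primitive_interval (hu.integrableOn_compact isCompact_uIcc)
  · simp [Icc_eq_empty_of_lt hba]

theorem ContinuousOn.hasDerivAt_primitive {u : ℝ → ℝ} {a b x : ℝ} (hu : ContinuousOn u (Icc a b))
    (hx : x ∈ Ioo a b) : HasDerivAt (fun y => ∫ t in a..y, u t) (u x) x :=
  intervalIntegral.integral_hasDerivAt_right
    ((hu.mono (Icc_subset_Icc_right hx.2.le)).intervalIntegrable_of_Icc hx.1.le)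
    ((hu.mono Ioo_subset_Icc_self).stronglyMeasurableAtFilter isOpen_Ioo x hx)
    (hu.continuousAt (Icc_mem_nhds hx.1 hx.2))

theorem integral_mul_const_sub_deriv {f f' f'' : ℝ → ℝ} {a b : ℝ} (c : ℝ)
    (hf : ∀ t ∈ uIcc a b, HasDerivAt f (f' t) t) (hf' : ∀ t ∈ uIcc a b, HasDerivAt f' (f'' t) t)
    (hf'' : IntervalIntegrable f'' volume a b) :
    ∫ t in a..b, t * (c - f'' t)
      = (c * b ^ 2 / 2 - b * f' b + f b) - (c * a ^ 2 / 2 - a * f' a + f a) := by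
  refine intervalIntegral.integral_eq_sub_of_hasDerivAt
    (f := fun t => c * t ^ 2 / 2 - t * f' t + f t) (fun t ht => ?_)
    ((intervalIntegrable_const.sub hf'').continuousOn_mul continuousOn_id)
  refine (((((hasDerivAt_pow 2 t).const_mul c).div_const 2).sub
    ((hasDerivAt_id t).mul (hf' t ht))).add (hf t ht)).congr_deriv ?_
  simp only [id]
  ring

noncomputable def rPhiBound (lam : ℝ) (f K₀ : ℝ → ℝ) (r : ℝ) : ℝ :=
  -lam * r ^ 3 / 6 + r * f r + r * f 0 - 2 * (∫ t in (0 : ℝ)..r, f t)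
    - ∫ s in (0 : ℝ)..r, ∫ t in (0 : ℝ)..s, t * K₀ t

section rPhiBound

variable {R : ℝ} {lam : ℝ} {f f' f'' K₀ : ℝ → ℝ}

theorem rPhiBound_zero : rPhiBound lam f K₀ 0 = 0 := by
  simp [rPhiBound]

theorem continuousOn_rPhiBound (hf : ContinuousOn f (Icc 0 R)) (hK : ContinuousOn K₀ (Icc 0 R)) :
    ContinuousOn (rPhiBound lam f K₀) (Icc 0 R) := by
  have hfc := hf.continuousOn_primitive
  have hA := (continuousOn_id.mul hK).continuousOn_primitive.continuousOn_primitive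
  unfold rPhiBound
  fun_prop

theorem hasDerivAt_rPhiBound (hf : ∀ t ∈ Icc (0 : ℝ) R, HasDerivAt f (f' t) t)
    (hf' : ∀ t ∈ Icc (0 : ℝ) R, HasDerivAt f' (f'' t) t) (hf'' : ContinuousOn f'' (Icc 0 R))
    (hK : ContinuousOn K₀ (Icc 0 R)) {s : ℝ} (hs : s ∈ Ioo 0 R) :
    HasDerivAt (rPhiBound lam f K₀) (-∫ t in (0 : ℝ)..s, t * (K₀ t + lam - f'' t)) s := by
  have hsub : uIcc 0 s ⊆ Icc 0 R := by
    rw [uIcc_of_le hs.1.le]; exact Icc_subset_Icc_right hs.2.le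
  have htK : ContinuousOn (fun t => t * K₀ t) (Icc 0 R) := continuousOn_id.mul hK
  have hsplit : ∫ t in (0 : ℝ)..s, t * (K₀ t + lam - f'' t)
      = (∫ t in (0 : ℝ)..s, t * K₀ t) + ∫ t in (0 : ℝ)..s, t * (lam - f'' t) := by
    simp only [add_sub_assoc, mul_add]
    exact intervalIntegral.integral_add ((htK.mono hsub).intervalIntegrable)
      ((continuousOn_id.mul (continuousOn_const.sub hf'')).mono hsub).intervalIntegrable
  have hparts := integral_mul_const_sub_deriv lam (fun t ht => hf t (hsub ht))
    (fun t ht => hf' t (hsub ht)) (hf''.mono hsub).intervalIntegrable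
  have hs' : s ∈ Icc 0 R := Ioo_subset_Icc_self hs
  have hderiv := (((((hasDerivAt_pow 3 s).const_mul (-lam)).div_const 6).add
    ((hasDerivAt_id s).mul (hf s hs'))).add ((hasDerivAt_id s).mul_const (f 0))).sub
    (((HasDerivAt.continuousOn hf).hasDerivAt_primitive hs).const_mul 2) |>.sub
    (htK.continuousOn_primitive.hasDerivAt_primitive hs)
  refine hderiv.congr_deriv ?_
  rw [hsplit, hparts]
  simp only [id]
  ring

end rPhiBound

theorem r_phi_integral_estimate_general (R lam : ℝ)
    (f f' f'' K₀ φ φ' : ℝ → ℝ)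
    (hf : ∀ t ∈ Icc (0 : ℝ) R, HasDerivAt f (f' t) t)
    (hf' : ∀ t ∈ Icc (0 : ℝ) R, HasDerivAt f' (f'' t) t)
    (hf'' : ContinuousOn f'' (Icc 0 R))
    (hK : ContinuousOn K₀ (Icc 0 R))
    (hφ : ∀ r ∈ Ioc (0 : ℝ) R, HasDerivAt φ (φ' r) r)
    (hlim : Tendsto (fun r => r * φ r) (nhdsWithin 0 (Ioi 0)) (nhds 0))
    (hineq : ∀ r ∈ Ioc (0 : ℝ) R,
      φ r + r * φ' r ≤ -∫ t in (0 : ℝ)..r, t * (K₀ t + lam - f'' t)) :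
    ∀ r ∈ Ioc (0 : ℝ) R,
      r * φ r ≤ -lam * r ^ 3 / 6 + r * f r + r * f 0 - 2 * (∫ t in (0 : ℝ)..r, f t)
        - ∫ s in (0 : ℝ)..r, ∫ t in (0 : ℝ)..s, t * K₀ t := by
  rintro r ⟨hr, hrR⟩
  have hBc : ContinuousOn (rPhiBound lam f K₀) (Icc 0 r) :=
    (continuousOn_rPhiBound (HasDerivAt.continuousOn hf) hK).mono (Icc_subset_Icc_right hrR)
  have hB0 : Tendsto (rPhiBound lam f K₀) (𝓝[>] 0) (𝓝 0) := by
    have h := (hBc 0 (left_mem_Icc.2 hr.le)).tendsto.mono_left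
      (nhdsWithin_mono _ Ioc_subset_Icc_self)
    rwa [nhdsWithin_Ioc_eq_nhdsGT hr, rPhiBound_zero] at h
  have hrφ : ∀ s ∈ Ioc 0 r, HasDerivAt (fun s => s * φ s) (1 * φ s + s * φ' s) s :=
    fun s hs => (hasDerivAt_id s).mul (hφ s ⟨hs.1, hs.2.trans hrR⟩)
  have key := le_of_tendsto_nhdsGT_of_hasDerivAt_nonpos
    (g := fun s => s * φ s - rPhiBound lam f K₀ s) hr
    ((HasDerivAt.continuousOn hrφ).sub (hBc.mono Ioc_subset_Icc_self))
    (fun s hs => (hrφ s (Ioo_subset_Ioc_self hs)).sub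
      (hasDerivAt_rPhiBound hf hf' hf'' hK ⟨hs.1, hs.2.trans_le hrR⟩))
    (fun s hs => by linarith [hineq s ⟨hs.1, hs.2.le.trans hrR⟩])
    (by simpa using hlim.sub hB0)
  exact sub_nonpos.mp key

/-- Key integral estimate in the proof of the volume growth theorems for gradient
ρ-Einstein solitons: along a radial geodesic, with `K₀` playing the role of `ρR`,
if `r φ(r) → 0` as `r → 0⁺` and
`φ(r) + r φ'(r) ≤ -∫₀ʳ t (K₀(t) + λ - f''(t)) dt` on `(0, R]`, then
`r φ(r) ≤ -λr³/6 + r f(r) + r f(0) - 2 ∫₀ʳ f - ∫₀ʳ ∫₀ˢ t K₀(t) dt ds`. -/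
theorem r_phi_integral_estimate (R lam : ℝ) (hR : 0 < R)
    (f f' f'' K₀ φ φ' : ℝ → ℝ)
    (hf : ∀ t ∈ Icc (0 : ℝ) R, HasDerivAt f (f' t) t)
    (hf' : ∀ t ∈ Icc (0 : ℝ) R, HasDerivAt f' (f'' t) t)
    (hf'' : ContinuousOn f'' (Icc 0 R))
    (hK : ContinuousOn K₀ (Icc 0 R))
    (hφ : ∀ r ∈ Ioc (0 : ℝ) R, HasDerivAt φ (φ' r) r)
    (hlim : Tendsto (fun r => r * φ r) (nhdsWithin 0 (Ioi 0)) (nhds 0))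
    (hineq : ∀ r ∈ Ioc (0 : ℝ) R,
      φ r + r * φ' r ≤ -∫ t in (0 : ℝ)..r, t * (K₀ t + lam - f'' t)) :
    ∀ r ∈ Ioc (0 : ℝ) R,
      r * φ r ≤ -lam * r ^ 3 / 6 + r * f r + r * f 0 - 2 * (∫ t in (0 : ℝ)..r, f t)
        - ∫ s in (0 : ℝ)..r, ∫ t in (0 : ℝ)..s, t * K₀ t :=
  r_phi_integral_estimate_general R lam f f' f'' K₀ φ φ' hf hf' hf'' hK hφ hlim hineq
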